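/- arXiv:2403.05120 — 2 statements merged into one kernel-verified Lean document; each statement's English description precedes it below -/
import Mathlib

section
/- If G is a connected graph that is not complete, then μ(D(G)) ≥ n(G) + μ_t(G). -/
open SimpleGraph

variable {V : Type*}

/-- A walk is a shortest path if it is a path and its length equals the distance
between its endpoints. -/
def SimpleGraph.IsShortestPath (G : SimpleGraph V) {u v : V} (p : G.Walk u v) : Prop :=
  p.IsPath ∧ p.length = G.dist u v

/-- `S` is a general position set: no three vertices of `S` lie on a common shortest path. -/
def SimpleGraph.IsGPSet (G : SimpleGraph V) (S : Set V) : Prop :=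
  ∀ ⦃u v : V⦄ (p : G.Walk u v), G.IsShortestPath p →
    ∀ x ∈ S, ∀ y ∈ S, ∀ z ∈ S, x ≠ y → x ≠ z → y ≠ z →
      ¬ (x ∈ p.support ∧ y ∈ p.support ∧ z ∈ p.support)

/-- `u` and `v` are `S`-visible: some shortest `u,v`-path has no internal vertex in `S`. -/
def SimpleGraph.SVisible (G : SimpleGraph V) (S : Set V) (u v : V) : Prop :=
  ∃ p : G.Walk u v, G.IsShortestPath p ∧ ∀ w ∈ p.support, w ≠ u → w ≠ v → w ∉ S

/-- `S` is a mutual-visibility set. -/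
def SimpleGraph.IsMVSet (G : SimpleGraph V) (S : Set V) : Prop :=
  ∀ u ∈ S, ∀ v ∈ S, u ≠ v → G.SVisible S u v

/-- `S` is a total mutual-visibility set. -/
def SimpleGraph.IsTotalMVSet (G : SimpleGraph V) (S : Set V) : Prop :=
  ∀ u v : V, u ≠ v → G.SVisible S u v

/-- `S` is an outer mutual-visibility set. -/
def SimpleGraph.IsOuterMVSet (G : SimpleGraph V) (S : Set V) : Prop :=
  G.IsMVSet S ∧ ∀ u ∈ S, ∀ v ∉ S, u ≠ v → G.SVisible S u v

/-- The mutual-visibility number `μ(G)`. -/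
noncomputable def SimpleGraph.mutualVisibilityNumber (G : SimpleGraph V) [Fintype V] : ℕ :=
  sSup {k | ∃ S : Finset V, G.IsMVSet ↑S ∧ S.card = k}

/-- The total mutual-visibility number `μ_t(G)`. -/
noncomputable def SimpleGraph.totalMutualVisibilityNumber (G : SimpleGraph V) [Fintype V] : ℕ :=
  sSup {k | ∃ S : Finset V, G.IsTotalMVSet ↑S ∧ S.card = k}

/-- The outer mutual-visibility number `μ_o(G)`. -/
noncomputable def SimpleGraph.outerMutualVisibilityNumber (G : SimpleGraph V) [Fintype V] : ℕ :=
  sSup {k | ∃ S : Finset V, G.IsOuterMVSet ↑S ∧ S.card = k}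

/-- The general position number `gp(G)`. -/
noncomputable def SimpleGraph.gpNumber (G : SimpleGraph V) [Fintype V] : ℕ :=
  sSup {k | ∃ S : Finset V, G.IsGPSet ↑S ∧ S.card = k}

/-- The double graph `D(G)`: two copies of each vertex, `(u, b)` adjacent to `(v, c)`
iff `u` adjacent to `v` in `G`. -/
def SimpleGraph.doubleGraph (G : SimpleGraph V) : SimpleGraph (V × Bool) where
  Adj x y := G.Adj x.1 y.1
  symm := ⟨fun _ _ h => G.adj_symm h⟩
  loopless := ⟨fun x h => G.irrefl h⟩

/-- The Mycielskian `M(G)`: `some (u, false)` are the original vertices, `some (u, true)`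
their copies, and `none` is the apex vertex `v*`. -/
def SimpleGraph.mycielskian (G : SimpleGraph V) : SimpleGraph (Option (V × Bool)) where
  Adj x y := match x, y with
    | some (u, false), some (v, false) => G.Adj u v
    | some (u, false), some (v, true) => G.Adj u v
    | some (u, true), some (v, false) => G.Adj u v
    | some (_, true), none => True
    | none, some (_, true) => True
    | _, _ => False
  symm := by
    constructor
    rintro (_ | ⟨u, (_|_)⟩) (_ | ⟨v, (_|_)⟩) h <;>
      first
        | exact h
        | exact G.adj_symm h
  loopless := by
    constructor
    rintro (_ | ⟨u, (_|_)⟩) h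
    · exact h
    · exact G.irrefl h
    · exact h

/-! Let `T` be a maximum total mutual-visibility set of `G`. In `D(G)` the set consisting of the
whole `false` copy of `V` together with the `true` copy of `T` is a mutual-visibility set. Two of
its vertices over distinct `u ≠ v` see each other along a shortest `u,v`-path of `G` with no
internal vertex in `T`, lifted to `D(G)` with all internal vertices in the `true` copy: the
projection `D(G) → G` is a homomorphism, so the lift is still shortest. The two copies of some
`t ∈ T` are at distance two, and see each other through the `true` copy of any neighbour of `t`
outside `T`; such a neighbour exists because `G` is not complete and `T` is totally visible. -/

namespace SimpleGraph

variable {G : SimpleGraph V} {u v w : V}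

lemma Reachable.dist_map_le {W : Type*} {G' : SimpleGraph W} (f : G →g G')
    (h : G.Reachable u v) : G'.dist (f u) (f v) ≤ G.dist u v := by
  obtain ⟨p, hp⟩ := h.exists_walk_length_eq_dist
  calc G'.dist (f u) (f v) ≤ (p.map f).length := dist_le _
    _ = G.dist u v := by rw [Walk.length_map, hp]

lemma isShortestPath_of_length_eq_dist {p : G.Walk u v} (hp : p.length = G.dist u v) :
    G.IsShortestPath p :=
  ⟨p.isPath_of_length_eq_dist hp, hp⟩

lemma SVisible.exists_adj_notMem {T : Set V} (h : G.SVisible T u v) (huv : u ≠ v)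
    (hnadj : ¬G.Adj u v) : ∃ m, G.Adj u m ∧ m ∉ T := by
  obtain ⟨p, -, hp⟩ := h
  cases p with
  | nil => exact absurd rfl huv
  | @cons _ m _ hum q =>
    have hmv : m ≠ v := by rintro rfl; exact hnadj hum
    exact ⟨m, hum, hp m (by simp) hum.ne' hmv⟩

lemma IsTotalMVSet.exists_adj_notMem (hnc : G ≠ ⊤) {T : Set V} (hT : G.IsTotalMVSet T)
    {t : V} (ht : t ∈ T) : ∃ m, G.Adj t m ∧ m ∉ T := by
  by_cases! huniv : ∃ x, x ≠ t ∧ ¬G.Adj t x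
  · obtain ⟨x, hxt, hnadj⟩ := huniv
    exact (hT t x hxt.symm).exists_adj_notMem hxt.symm hnadj
  · obtain ⟨a, b, hab, hnadj⟩ : ∃ a b, a ≠ b ∧ ¬G.Adj a b := by
      by_contra! hall
      exact hnc (eq_top_iff.2 fun a b hab => hall a b hab)
    obtain ⟨m, -, hm⟩ := (hT a b hab).exists_adj_notMem hab hnadj
    exact ⟨m, huniv m (ne_of_mem_of_not_mem ht hm).symm, hm⟩

lemma isTotalMVSet_empty (h : G.Preconnected) : G.IsTotalMVSet ∅ := by
  intro u v _
  obtain ⟨p, hp, hlen⟩ := (h u v).exists_path_of_dist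
  exact ⟨p, ⟨hp, hlen⟩, fun _ _ _ _ => id⟩

def doubleGraphFst (G : SimpleGraph V) : G.doubleGraph →g G := ⟨Prod.fst, id⟩

/-- The lift of the walk `cons h q` whose interior vertices all lie in the `true` copy; the first
edge is taken apart so that both endpoints can be put in arbitrary copies. -/
def doubleLift : ∀ {u w v : V}, G.Adj u w → G.Walk w v → (b c : Bool) →
    G.doubleGraph.Walk (u, b) (v, c)
  | _, _, _, h, .nil, b, c => .cons (show G.doubleGraph.Adj (_, b) (_, c) from h) .nil
  | _, _, _, h, .cons h' q, b, c =>
    .cons (show G.doubleGraph.Adj (_, b) (_, true) from h) (doubleLift h' q true c)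

lemma map_doubleLift : ∀ {u w v : V} (h : G.Adj u w) (q : G.Walk w v) (b c : Bool),
    (doubleLift h q b c).map (doubleGraphFst G) = .cons h q
  | _, _, _, _, .nil, _, _ => rfl
  | _, _, _, _, .cons h' q, _, _ => by
    simp only [doubleLift, Walk.map_cons, map_doubleLift h' q]; rfl

lemma mem_support_doubleLift : ∀ {u w v : V} (h : G.Adj u w) (q : G.Walk w v) (b c : Bool)
    {x : V × Bool}, x ∈ (doubleLift h q b c).support → x = (u, b) ∨ x = (v, c) ∨ x.2 = true
  | _, _, _, _, .nil, _, _, x, hx => by simp [doubleLift] at hx; exact hx.imp_right .inl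
  | _, _, _, _, .cons h' q, _, _, x, hx => by
    simp only [doubleLift, Walk.support_cons, List.mem_cons] at hx
    rcases hx with rfl | hx
    · exact .inl rfl
    · rcases mem_support_doubleLift h' q true _ hx with rfl | h | h
      · exact .inr (.inr rfl)
      · exact .inr (.inl h)
      · exact .inr (.inr h)

lemma SVisible.doubleGraph {T : Set V} {S : Set (V × Bool)} (hS : ∀ w ∉ T, (w, true) ∉ S)
    (h : G.SVisible T u v) (huv : u ≠ v) (b c : Bool) :
    G.doubleGraph.SVisible S (u, b) (v, c) := by
  obtain ⟨p, ⟨hpath, hlen⟩, hpT⟩ := h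
  cases p with
  | nil => exact absurd rfl huv
  | cons h q =>
    set W := doubleLift h q b c
    have hmap : W.map (doubleGraphFst G) = .cons h q := map_doubleLift h q b c
    have hW : G.doubleGraph.IsShortestPath W := by
      refine isShortestPath_of_length_eq_dist (le_antisymm ?_ (dist_le W))
      calc W.length = G.dist u v :=
          (W.length_map _).symm.trans (congrArg Walk.length hmap ▸ hlen)
        _ ≤ _ := W.reachable.dist_map_le (doubleGraphFst G)
    refine ⟨W, hW, fun x hx hxu hxv hxS => ?_⟩
    have hsupp : W.support.map Prod.fst = (Walk.cons h q).support :=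
      (W.support_map _).symm.trans (congrArg Walk.support hmap)
    have hfst_inj := List.inj_on_of_nodup_map (hsupp ▸ hpath.support_nodup)
    have hxu' : x.1 ≠ u := fun hx1 => hxu (hfst_inj hx W.start_mem_support hx1)
    have hxv' : x.1 ≠ v := fun hx1 => hxv (hfst_inj hx W.end_mem_support hx1)
    rcases mem_support_doubleLift h q b c hx with rfl | rfl | hx2
    · exact hxu rfl
    · exact hxv rfl
    · exact hS x.1 (hpT x.1 (hsupp ▸ List.mem_map_of_mem hx) hxu' hxv') (hx2 ▸ hxS)

lemma doubleGraph_sVisible_copies {S : Set (V × Bool)} (h : G.Adj u w) (hw : (w, true) ∉ S)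
    {b c : Bool} (hbc : b ≠ c) : G.doubleGraph.SVisible S (u, b) (u, c) := by
  let W : G.doubleGraph.Walk (u, b) (u, c) :=
    .cons (show G.doubleGraph.Adj (u, b) (w, true) from h)
      (.cons (show G.doubleGraph.Adj (w, true) (u, c) from h.symm) .nil)
  have hne : (u, b) ≠ (u, c) := by simp [hbc]
  have hlen : W.length = G.doubleGraph.dist (u, b) (u, c) :=
    le_antisymm (W.reachable.one_lt_dist_of_ne_of_not_adj hne (G.irrefl (v := u))) (dist_le W)
  refine ⟨W, isShortestPath_of_length_eq_dist hlen, fun x hx hxu hxc => ?_⟩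
  simp only [W, Walk.support_cons, Walk.support_nil, List.mem_cons, List.not_mem_nil,
    or_false] at hx
  rcases hx with rfl | rfl | rfl
  exacts [absurd rfl hxu, hw, absurd rfl hxc]

lemma IsTotalMVSet.isMVSet_doubleGraph (hnc : G ≠ ⊤) {T : Set V} (hT : G.IsTotalMVSet T) :
    G.doubleGraph.IsMVSet (Set.univ ×ˢ {false} ∪ T ×ˢ {true}) := by
  have hS : ∀ w ∉ T, (w, true) ∉ Set.univ ×ˢ {false} ∪ T ×ˢ {true} := by simp
  rintro ⟨u, b⟩ hu ⟨v, c⟩ hv huv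
  rcases eq_or_ne u v with rfl | huv'
  · have hbc : b ≠ c := by rintro rfl; exact huv rfl
    have huT : u ∈ T := by cases b <;> cases c <;> simp_all
    obtain ⟨w, huw, hwT⟩ := hT.exists_adj_notMem hnc huT
    exact doubleGraph_sVisible_copies huw (hS w hwT) hbc
  · exact (hT u v huv').doubleGraph hS huv' b c

lemma exists_isTotalMVSet_card_eq [Fintype V] (h : G.Preconnected) :
    ∃ T : Finset V, G.IsTotalMVSet T ∧ T.card = G.totalMutualVisibilityNumber :=
  Nat.sSup_mem (s := {k | ∃ T : Finset V, G.IsTotalMVSet T ∧ T.card = k})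
    ⟨0, ∅, by simpa using isTotalMVSet_empty h, rfl⟩
    ⟨Fintype.card V, fun _ ⟨S, _, hS⟩ => hS ▸ S.card_le_univ⟩

lemma IsMVSet.card_le_mutualVisibilityNumber [Fintype V] {S : Finset V} (hS : G.IsMVSet S) :
    S.card ≤ G.mutualVisibilityNumber :=
  le_csSup ⟨Fintype.card V, fun _ ⟨S, _, hS⟩ => hS ▸ S.card_le_univ⟩ ⟨S, hS, rfl⟩

end SimpleGraph

open Finset in
theorem mu_double_ge [Fintype V] (G : SimpleGraph V) (hconn : G.Connected)
    (hnc : G ≠ ⊤) :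
    Fintype.card V + G.totalMutualVisibilityNumber ≤ G.doubleGraph.mutualVisibilityNumber := by
  classical
  obtain ⟨T, hT, hTcard⟩ := exists_isTotalMVSet_card_eq hconn.preconnected
  let S : Finset (V × Bool) := univ ×ˢ {false} ∪ T ×ˢ {true}
  have hScard : S.card = Fintype.card V + T.card := by
    rw [card_union_of_disjoint (disjoint_product.2 (.inr (by simp))), card_product, card_product]
    simp
  have hS : G.doubleGraph.IsMVSet S := by
    simpa only [S, coe_union, coe_product, coe_univ, coe_singleton] using
      hT.isMVSet_doubleGraph hnc
  calc Fintype.card V + G.totalMutualVisibilityNumber = S.card := by rw [hScard, hTcard]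
    _ ≤ _ := hS.card_le_mutualVisibilityNumber
end

section
/- If G is a graph with at least 2 vertices having a universal vertex, then the mutual-visibility number of the Mycielskian M(G) equals 2n(G) − 1. -/
open SimpleGraph

variable {V : Type*}

/-!
Take a universal vertex `v₀` of `G`. Any two vertices of `M(G)` other than `v*` and `v₀` are
adjacent or have `v₀` or `v*` as a common neighbour, so these `2n - 1` vertices are mutually
visible. Conversely, a set of at least `2n` of the `2n + 1` vertices misses at most one vertex `z`,
and contains two vertices at distance two all of whose common neighbours lie in the set:
`u', u` if `z = v*`, `u', w'` with `w ≠ u` if `z = u`, and `u, v*` if `z = u'`. Such a pair is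
not mutually visible.
-/

namespace SimpleGraph

section Visibility

variable {H : SimpleGraph V} {S : Set V} {u v w : V}

lemma dist_eq_two_of_adj_of_adj (hne : u ≠ v) (huv : ¬H.Adj u v) (huw : H.Adj u w)
    (hwv : H.Adj w v) : H.dist u v = 2 := by
  rw [dist, edist_eq_two_iff.mpr ⟨hne, huv, w, huw, hwv.symm⟩]
  rfl

lemma SVisible.of_adj (h : H.Adj u v) : H.SVisible S u v := by
  refine ⟨h.toWalk, ⟨h.isPath_toWalk, (dist_eq_one_iff_adj.mpr h).symm⟩, ?_⟩
  intro x hx hxu hxv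
  simp only [Adj.toWalk, Walk.support_cons, Walk.support_nil, List.mem_cons,
    List.not_mem_nil, or_false] at hx
  rcases hx with rfl | rfl <;> contradiction

lemma SVisible.of_adj_of_adj (hne : u ≠ v) (huw : H.Adj u w) (hwv : H.Adj w v) (hw : w ∉ S) :
    H.SVisible S u v := by
  by_cases huv : H.Adj u v
  · exact .of_adj huv
  refine ⟨.cons huw (.cons hwv .nil), ⟨?_, ?_⟩, ?_⟩
  · simp [Walk.isPath_def, huw.ne, hwv.ne, hne]
  · simp [dist_eq_two_of_adj_of_adj hne huv huw hwv]
  · intro x hx hxu hxv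
    simp only [Walk.support_cons, Walk.support_nil, List.mem_cons, List.not_mem_nil,
      or_false] at hx
    rcases hx with rfl | rfl | rfl <;> trivial

lemma not_sVisible_of_dist_eq_two (hd : H.dist u v = 2)
    (hS : ∀ w, H.Adj u w → H.Adj w v → w ∈ S) : ¬H.SVisible S u v := by
  rintro ⟨p, ⟨-, hlen⟩, hint⟩
  rw [hd] at hlen
  have huw : H.Adj u (p.getVert 1) := by simpa using p.adj_getVert_succ (i := 0) (by omega)
  have hwv : H.Adj (p.getVert 1) v := by
    simpa [← hlen] using p.adj_getVert_succ (i := 1) (by omega)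
  exact hint _ (p.getVert_mem_support 1) huw.ne' hwv.ne (hS _ huw hwv)

lemma IsMVSet.card_add_two_le [Fintype V] [Nonempty V] {S : Finset V} (hS : H.IsMVSet S)
    (hpair : ∀ z, ∃ u v, u ≠ z ∧ v ≠ z ∧ H.dist u v = 2 ∧
      ∀ w, H.Adj u w → H.Adj w v → w ≠ z) :
    S.card + 2 ≤ Fintype.card V := by
  classical
  by_contra! hcard
  obtain ⟨z, hz⟩ : ∃ z, Sᶜ ⊆ {z} :=
    Finset.card_le_one_iff_subset_singleton.mp (by rw [Finset.card_compl]; omega)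
  have hmem : ∀ x, x ≠ z → x ∈ S := fun x hx => by
    by_contra hxS
    exact hx (Finset.mem_singleton.mp (hz (Finset.mem_compl.mpr hxS)))
  obtain ⟨u, v, hu, hv, hd, hcommon⟩ := hpair z
  have hne : u ≠ v := by rintro rfl; simp at hd
  exact not_sVisible_of_dist_eq_two hd (fun w huw hwv => hmem w (hcommon w huw hwv))
    (hS u (hmem u hu) v (hmem v hv) hne)

lemma mutualVisibilityNumber_eq_of_forall_card_le [Fintype V] {k : ℕ}
    (hmem : ∃ S : Finset V, H.IsMVSet S ∧ S.card = k)
    (hle : ∀ S : Finset V, H.IsMVSet S → S.card ≤ k) :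
    H.mutualVisibilityNumber = k :=
  IsGreatest.csSup_eq ⟨hmem, by rintro _ ⟨S, hS, rfl⟩; exact hle S hS⟩

end Visibility

section Mycielskian

variable {G : SimpleGraph V}

lemma mycielskian_isMVSet_compl {v₀ : V} (hv₀ : ∀ w, w ≠ v₀ → G.Adj v₀ w) :
    G.mycielskian.IsMVSet {none, some (v₀, false)}ᶜ := by
  have hout : some (v₀, false) ∉ ({none, some (v₀, false)}ᶜ : Set (Option (V × Bool))) := by
    simp
  rintro (_ | ⟨a, ba⟩) hu (_ | ⟨b, bb⟩) hv huv
  · simp at hu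
  · simp at hu
  · simp at hv
  by_cases hab : G.mycielskian.Adj (some (a, ba)) (some (b, bb))
  · exact .of_adj hab
  cases ba <;> cases bb <;>
    simp only [Set.mem_compl_iff, Set.mem_insert_iff, Set.mem_singleton_iff, reduceCtorEq,
      Option.some.injEq, Prod.mk.injEq, and_true, and_false, or_self, false_or,
      Bool.true_eq_false, not_false_eq_true] at hu hv
  · exact .of_adj_of_adj (w := some (v₀, false)) huv (hv₀ a hu).symm (hv₀ b hv) hout
  · have hb : b ≠ v₀ := by rintro rfl; exact hab (hv₀ a hu).symm
    exact .of_adj_of_adj (w := some (v₀, false)) huv (hv₀ a hu).symm (hv₀ b hb) hout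
  · have ha : a ≠ v₀ := by rintro rfl; exact hab (hv₀ b hv)
    exact .of_adj_of_adj (w := some (v₀, false)) huv (hv₀ a ha).symm (hv₀ b hv) hout
  · exact .of_adj_of_adj (w := none) huv trivial trivial (by simp)

lemma mycielskian_exists_dist_eq_two_avoiding [Nontrivial V] (hdeg : ∀ c, ∃ x, G.Adj c x)
    (z : Option (V × Bool)) :
    ∃ u v, u ≠ z ∧ v ≠ z ∧ G.mycielskian.dist u v = 2 ∧
      ∀ w, G.mycielskian.Adj u w → G.mycielskian.Adj w v → w ≠ z := by
  rcases z with _ | ⟨c, _ | _⟩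
  · obtain ⟨a⟩ := ‹Nontrivial V›.to_nonempty
    obtain ⟨x, hx⟩ := hdeg a
    refine ⟨some (a, true), some (a, false), by simp, by simp, ?_, ?_⟩
    · exact dist_eq_two_of_adj_of_adj (w := some (x, false)) (by simp) G.irrefl hx hx.symm
    · rintro _ - h rfl
      exact h
  · obtain ⟨d, hd⟩ := exists_ne c
    refine ⟨some (c, true), some (d, true), by simp, by simp, ?_, ?_⟩
    · exact dist_eq_two_of_adj_of_adj (w := none) (by simp [hd.symm]) id trivial trivial
    · rintro _ h - rfl
      exact G.irrefl h
  · obtain ⟨x, hx⟩ := hdeg c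
    refine ⟨some (c, false), none, by simp, by simp, ?_, ?_⟩
    · exact dist_eq_two_of_adj_of_adj (w := some (x, true)) (by simp) id hx trivial
    · rintro _ h - rfl
      exact G.irrefl h

end Mycielskian

end SimpleGraph

theorem mu_mycielskian_universal [Fintype V] (G : SimpleGraph V)
    (hn : 2 ≤ Fintype.card V) (huniv : ∃ v : V, ∀ w : V, w ≠ v → G.Adj v w) :
    G.mycielskian.mutualVisibilityNumber = 2 * Fintype.card V - 1 := by
  classical
  obtain ⟨v₀, hv₀⟩ := huniv
  have : Nontrivial V := Fintype.one_lt_card_iff_nontrivial.mp hn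
  have hdeg : ∀ c, ∃ x, G.Adj c x := fun c => by
    by_cases hc : c = v₀
    · obtain ⟨w, hw⟩ := exists_ne v₀
      exact ⟨w, hc ▸ hv₀ w hw⟩
    · exact ⟨v₀, (hv₀ c hc).symm⟩
  have hcard : Fintype.card (Option (V × Bool)) = 2 * Fintype.card V + 1 := by
    simp [Fintype.card_option, Fintype.card_prod, mul_comm]
  apply mutualVisibilityNumber_eq_of_forall_card_le
  · refine ⟨{none, some (v₀, false)}ᶜ, ?_, ?_⟩
    · rw [Finset.coe_compl, Finset.coe_pair]
      exact mycielskian_isMVSet_compl hv₀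
    · rw [Finset.card_compl, Finset.card_pair (by simp), hcard]
      omega
  · intro S hS
    have := hS.card_add_two_le (mycielskian_exists_dist_eq_two_avoiding hdeg)
    omega
end
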